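/- A totally antisymmetric 3-tensor χ on ℝ⁷ is of the form χ = i_φ(h) for some traceless symmetric real 7×7 matrix h if and only if Σ_{a,b,c} χ_{abc} φ₀_{abc} = 0 and Σ_{m,n,p} χ_{mnp} ψ₀_{mnpa} = 0 for every index a. (This is the characterization Λ³₂₇ = {χ ∈ Λ³ : χ ∧ φ₀ = 0 and χ ∧ ψ₀ = 0}.) -/

import Mathlib

open scoped BigOperators

noncomputable section

/-- Kronecker delta `δ` on `Fin 7`. -/
def kd (a b : Fin 7) : ℝ := if a = b then 1 else 0

/-- The elementary alternating 3-tensor supported on permutations of `(i, j, k)`. -/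
def trip (i j k a b c : Fin 7) : ℝ :=
  (if a = i ∧ b = j ∧ c = k then (1 : ℝ) else 0)
    + (if a = j ∧ b = k ∧ c = i then (1 : ℝ) else 0)
    + (if a = k ∧ b = i ∧ c = j then (1 : ℝ) else 0)
    - (if a = i ∧ b = k ∧ c = j then (1 : ℝ) else 0)
    - (if a = k ∧ b = j ∧ c = i then (1 : ℝ) else 0)
    - (if a = j ∧ b = i ∧ c = k then (1 : ℝ) else 0)

/-- The standard `G₂` 3-form `φ₀` on `ℝ⁷`.  Indices `0, …, 6` correspond to the
paper's `1, …, 7`, so this is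
`e^{123} + e^{145} + e^{167} + e^{246} - e^{257} - e^{347} - e^{356}`. -/
def phi0 (a b c : Fin 7) : ℝ :=
  trip 0 1 2 a b c + trip 0 3 4 a b c + trip 0 5 6 a b c + trip 1 3 5 a b c
    - trip 1 4 6 a b c - trip 2 3 6 a b c - trip 2 4 5 a b c

/-- The totally antisymmetric Levi-Civita symbol `ε̂` on seven indices,
with `ε̂_{1234567} = 1`. -/
def eps7 (a b c d e f g : Fin 7) : ℝ :=
  if h : Function.Bijective ![a, b, c, d, e, f, g] then
    ((Equiv.Perm.sign (Equiv.ofBijective _ h) : ℤ) : ℝ)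
  else 0

/-- The 4-form `ψ₀ = ⋆φ₀`, the Euclidean Hodge dual of `φ₀`:
`ψ₀ = e^{4567} + e^{2367} + e^{2345} + e^{1357} - e^{1346} - e^{1256} - e^{1247}`. -/
def psi0 (m n p q : Fin 7) : ℝ :=
  (1 / 6 : ℝ) * ∑ r, ∑ s, ∑ t, eps7 m n p q r s t * phi0 r s t

/-- The map `i_φ` sending a symmetric matrix `h` to the 3-tensor
`i_φ(h)_{abc} = (1/3) Σ_d (h_{ad} φ₀_{dbc} + h_{bd} φ₀_{adc} + h_{cd} φ₀_{abd})`. -/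
def iphi (h : Matrix (Fin 7) (Fin 7) ℝ) (a b c : Fin 7) : ℝ :=
  (1 / 3 : ℝ) * ∑ d, (h a d * phi0 d b c + h b d * phi0 a d c + h c d * phi0 a b d)

/-!
For an alternating 3-tensor `χ` put `P(χ)_{xd} = Σ_{mn} χ_{xmn} φ₀_{dmn}` (`contractPhi0`). Then
`tr P(χ) = ⟨χ, φ₀⟩`, `3 (P(χ)_{xy} - P(χ)_{yx}) = -Σ_e (χ ⌟ ψ₀)_e φ₀_{exy}` and
`9 i_φ(P(χ)) = 12 χ + ⟨χ, φ₀⟩ φ₀ - Σ_e (χ ⌟ ψ₀)_e ψ₀_{e···}`, so when both contractions of `χ`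
vanish, `h = (3/4) P(χ)` is symmetric, traceless and `i_φ(h) = χ`. Conversely
`⟨i_φ(h), φ₀⟩ = 6 tr h` and `(i_φ(h) ⌟ ψ₀)_e = 4 Σ_{ad} h_{ad} φ₀_{dae}`, which vanishes for
symmetric `h`.

All these identities are linear in an alternating tensor, so they reduce to finitely many
identities between entries of `φ₀` and `ψ₀` on increasing index triples, which `decide` checks
on integer copies of `φ₀` and `ψ₀`.
-/

open Finset

section Alternating

variable {ι : Type*}

def IsAlternating3 (f : ι → ι → ι → ℝ) : Prop :=
  (∀ a b c, f a b c = -f b a c) ∧ ∀ a b c, f a b c = -f a c b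

def alt3 {M : Type*} [AddCommGroup M] (f : ι → ι → ι → M) (a b c : ι) : M :=
  f a b c + f b c a + f c a b - f b a c - f a c b - f c b a

lemma isAlternating3_alt3 (f : ι → ι → ι → ℝ) : IsAlternating3 (alt3 f) :=
  ⟨fun _ _ _ => by unfold alt3; ring, fun _ _ _ => by unfold alt3; ring⟩

namespace IsAlternating3

variable {f : ι → ι → ι → ℝ}

lemma cyclic (hf : IsAlternating3 f) (a b c : ι) : f b c a = f a b c := by
  rw [hf.1 a b c, hf.2 b a c, neg_neg]

lemma alt3_eq (hf : IsAlternating3 f) (a b c : ι) : alt3 f a b c = 6 * f a b c := by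
  unfold alt3
  linarith [hf.cyclic a b c, hf.cyclic b c a, hf.1 a b c, hf.2 a b c, hf.2 c a b]

lemma add {g : ι → ι → ι → ℝ} (hf : IsAlternating3 f) (hg : IsAlternating3 g) :
    IsAlternating3 fun a b c => f a b c + g a b c :=
  ⟨fun a b c => by simp only [hf.1 a b c, hg.1 a b c, neg_add],
    fun a b c => by simp only [hf.2 a b c, hg.2 a b c, neg_add]⟩

lemma neg (hf : IsAlternating3 f) : IsAlternating3 fun a b c => -f a b c :=
  ⟨fun a b c => by simp only [hf.1 a b c], fun a b c => by simp only [hf.2 a b c]⟩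

lemma sub {g : ι → ι → ι → ℝ} (hf : IsAlternating3 f) (hg : IsAlternating3 g) :
    IsAlternating3 fun a b c => f a b c - g a b c := by
  simpa only [sub_eq_add_neg] using hf.add hg.neg

lemma const_mul (hf : IsAlternating3 f) (r : ℝ) : IsAlternating3 fun a b c => r * f a b c :=
  ⟨fun a b c => by simp only [hf.1 a b c, mul_neg], fun a b c => by simp only [hf.2 a b c, mul_neg]⟩

lemma mul_const (hf : IsAlternating3 f) (r : ℝ) : IsAlternating3 fun a b c => f a b c * r :=
  ⟨fun a b c => by simp only [hf.1 a b c, neg_mul], fun a b c => by simp only [hf.2 a b c, neg_mul]⟩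

lemma sum {κ : Type*} (s : Finset κ) {F : κ → ι → ι → ι → ℝ} (hF : ∀ e, IsAlternating3 (F e)) :
    IsAlternating3 fun a b c => ∑ e ∈ s, F e a b c :=
  ⟨fun a b c => by simp only [(hF _).1 a b c, sum_neg_distrib],
    fun a b c => by simp only [(hF _).2 a b c, sum_neg_distrib]⟩

lemma eq_zero_of_lt [LinearOrder ι] (hf : IsAlternating3 f)
    (h : ∀ a b c, a < b → b < c → f a b c = 0) (a b c : ι) : f a b c = 0 := by
  have diag₁ : ∀ a c, f a a c = 0 := fun a c => by linarith [hf.1 a a c]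
  have diag₂ : ∀ a b, f a b b = 0 := fun a b => by linarith [hf.2 a b b]
  have of_lt : ∀ a b c, a < b → f a b c = 0 := by
    intro a b c hab
    rcases lt_trichotomy b c with hbc | rfl | hbc
    · exact h a b c hab hbc
    · exact diag₂ a b
    rcases lt_trichotomy a c with hac | rfl | hac
    · rw [hf.2, h a c b hac hbc, neg_zero]
    · rw [← hf.cyclic, diag₂]
    · rw [hf.cyclic c a b, h c a b hac hab]
  rcases lt_trichotomy a b with hab | rfl | hab
  · exact of_lt a b c hab
  · exact diag₁ a c
  · rw [hf.1, of_lt b a c hab, neg_zero]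

lemma sum_mul_alt3 [Fintype ι] {χ : ι → ι → ι → ℝ} (hχ : IsAlternating3 χ)
    (K : ι → ι → ι → ℝ) :
    ∑ a, ∑ b, ∑ c, χ a b c * alt3 K a b c = 6 * ∑ a, ∑ b, ∑ c, χ a b c * K a b c := by
  have congr3 : ∀ {F G : ι → ι → ι → ℝ}, (∀ a b c, F a b c = G a b c) →
      ∑ a, ∑ b, ∑ c, F a b c = ∑ a, ∑ b, ∑ c, G a b c := fun h => by simp only [h]
  have rotate : ∀ F : ι → ι → ι → ℝ, ∑ a, ∑ b, ∑ c, F a b c = ∑ a, ∑ b, ∑ c, F c a b :=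
    fun F => sum_comm.trans (sum_congr rfl fun _ _ => sum_comm)
  have swap₁₂ : ∀ F : ι → ι → ι → ℝ, ∑ a, ∑ b, ∑ c, F a b c = ∑ a, ∑ b, ∑ c, F b a c :=
    fun F => sum_comm
  have swap₂₃ : ∀ F : ι → ι → ι → ℝ, ∑ a, ∑ b, ∑ c, F a b c = ∑ a, ∑ b, ∑ c, F a c b :=
    fun F => sum_congr rfl fun _ _ => sum_comm
  have h₁ : ∑ a, ∑ b, ∑ c, χ a b c * K b c a = ∑ a, ∑ b, ∑ c, χ a b c * K a b c := by
    rw [rotate]; exact congr3 fun a b c => by rw [hχ.cyclic c a b]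
  have h₂ : ∑ a, ∑ b, ∑ c, χ a b c * K c a b = ∑ a, ∑ b, ∑ c, χ a b c * K a b c := by
    rw [rotate, rotate]; exact congr3 fun a b c => by rw [hχ.cyclic a b c]
  have h₃ : ∑ a, ∑ b, ∑ c, χ a b c * K b a c = -∑ a, ∑ b, ∑ c, χ a b c * K a b c := by
    rw [swap₁₂]; simp only [← sum_neg_distrib]
    exact congr3 fun a b c => by rw [hχ.1 b a c]; ring
  have h₄ : ∑ a, ∑ b, ∑ c, χ a b c * K a c b = -∑ a, ∑ b, ∑ c, χ a b c * K a b c := by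
    rw [swap₂₃]; simp only [← sum_neg_distrib]
    exact congr3 fun a b c => by rw [hχ.2 a c b]; ring
  have h₅ : ∑ a, ∑ b, ∑ c, χ a b c * K c b a = -∑ a, ∑ b, ∑ c, χ a b c * K a b c := by
    rw [swap₂₃, rotate]; simp only [← sum_neg_distrib]
    exact congr3 fun a b c => by rw [hχ.1 c b a, hχ.cyclic a b c]; ring
  simp only [alt3, mul_add, mul_sub, sum_add_distrib, sum_sub_distrib, h₁, h₂, h₃, h₄, h₅]
  ring

lemma sum_mul_eq_of_alt3 [Fintype ι] [LinearOrder ι] {χ K L : ι → ι → ι → ℝ}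
    (hχ : IsAlternating3 χ) (hL : IsAlternating3 L)
    (hKL : ∀ a b c, a < b → b < c → alt3 K a b c = 6 * L a b c) :
    ∑ a, ∑ b, ∑ c, χ a b c * K a b c = ∑ a, ∑ b, ∑ c, χ a b c * L a b c := by
  have hD := (isAlternating3_alt3 K).sub (hL.const_mul 6)
  have hK : ∀ a b c, alt3 K a b c = 6 * L a b c := fun a b c =>
    sub_eq_zero.1 (hD.eq_zero_of_lt (fun a b c hab hbc => sub_eq_zero.2 (hKL a b c hab hbc)) a b c)
  have := hχ.sum_mul_alt3 K
  simp only [hK, mul_left_comm _ (6 : ℝ), ← mul_sum] at this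
  linarith

end IsAlternating3

lemma eq_zero_of_lt_of_isAlternating3 [LinearOrder ι] {G : ι → ι → ι → ι → ℝ}
    (hl : ∀ q, IsAlternating3 fun m n p => G m n p q) (hr : ∀ m, IsAlternating3 (G m))
    (h : ∀ m n p q, m < n → n < p → p < q → G m n p q = 0) (m n p q : ι) : G m n p q = 0 := by
  refine (hl q).eq_zero_of_lt (fun m n p hmn hnp => ?_) m n p
  have e₁ : G m n p q = -G m n q p := (hr m).2 n p q
  have e₂ : G m n q p = -G m q n p := (hl p).2 m n q
  have e₃ : G m q n p = -G q m n p := (hl p).1 m q n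
  rcases lt_trichotomy p q with hpq | rfl | hqp
  · exact h m n p q hmn hnp hpq
  · linarith
  rcases lt_trichotomy n q with hnq | rfl | hqn
  · linarith [h m n q p hmn hnq hqp]
  · have : G m n n p = -G m n n p := (hl p).2 m n n
    linarith
  rcases lt_trichotomy m q with hmq | rfl | hqm
  · linarith [h m q n p hmq hqn hnp]
  · have : G m m n p = -G m m n p := (hl p).1 m m n
    linarith
  · linarith [h q m n p hqm hmn hnp]

lemma sum_sum_mul_sum_mul [Fintype ι] (χ : ι → ι → ℝ) (G : ι → ι → ι → ℝ) (w : ι → ℝ) :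
    ∑ a, ∑ b, χ a b * ∑ e, G a b e * w e = ∑ e, (∑ a, ∑ b, χ a b * G a b e) * w e := by
  simp only [mul_sum, sum_mul]
  calc _ = ∑ a, ∑ e, ∑ b, χ a b * (G a b e * w e) := sum_congr rfl fun a _ => sum_comm
    _ = _ := sum_comm.trans (by simp only [mul_assoc])

lemma sum_mul_sum_mul [Fintype ι] (χ : ι → ι → ι → ℝ) (G : ι → ι → ι → ι → ℝ) (w : ι → ℝ) :
    ∑ a, ∑ b, ∑ c, χ a b c * ∑ e, G a b c e * w e =
      ∑ e, (∑ a, ∑ b, ∑ c, χ a b c * G a b c e) * w e := by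
  simp only [mul_sum, sum_mul]
  calc _ = ∑ a, ∑ b, ∑ e, ∑ c, χ a b c * (G a b c e * w e) :=
        sum_congr rfl fun a _ => sum_congr rfl fun b _ => sum_comm
    _ = ∑ a, ∑ e, ∑ b, ∑ c, χ a b c * (G a b c e * w e) := sum_congr rfl fun a _ => sum_comm
    _ = _ := sum_comm.trans (by simp only [mul_assoc])

end Alternating

/- Integer copies of `trip`, `φ₀`, `δ`, `ψ₀` and `ε̂`, on which identities between entries are
checked by `decide`. -/

def tripZ (i j k a b c : Fin 7) : ℤ :=
  (if a = i ∧ b = j ∧ c = k then (1 : ℤ) else 0)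
    + (if a = j ∧ b = k ∧ c = i then (1 : ℤ) else 0)
    + (if a = k ∧ b = i ∧ c = j then (1 : ℤ) else 0)
    - (if a = i ∧ b = k ∧ c = j then (1 : ℤ) else 0)
    - (if a = k ∧ b = j ∧ c = i then (1 : ℤ) else 0)
    - (if a = j ∧ b = i ∧ c = k then (1 : ℤ) else 0)

def phiZ (a b c : Fin 7) : ℤ :=
  tripZ 0 1 2 a b c + tripZ 0 3 4 a b c + tripZ 0 5 6 a b c + tripZ 1 3 5 a b c
    - tripZ 1 4 6 a b c - tripZ 2 3 6 a b c - tripZ 2 4 5 a b c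

def kdZ (a b : Fin 7) : ℤ := if a = b then 1 else 0

/-- By the `G₂` identity `ψ₀_{mnpq} = Σ_k φ₀_{mnk} φ₀_{pqk} - δ_{mp} δ_{nq} + δ_{mq} δ_{np}`
(`psi0_eq_cast`), this is `ψ₀`; unlike the Hodge dual it is cheap to evaluate. -/
def psiZ (m n p q : Fin 7) : ℤ :=
  ∑ k, phiZ m n k * phiZ p q k - kdZ m p * kdZ n q + kdZ m q * kdZ n p

def leviCivita {n : ℕ} (v : Fin n → Fin n) : ℤ :=
  if h : Function.Bijective v then Equiv.Perm.sign (Equiv.ofBijective v h) else 0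

lemma kd_eq_cast (a b : Fin 7) : kd a b = kdZ a b := by
  unfold kd kdZ; split_ifs <;> simp

lemma phi0_eq_cast (a b c : Fin 7) : phi0 a b c = phiZ a b c := by
  simp only [phi0, phiZ, trip, tripZ, Int.cast_sub, Int.cast_add, apply_ite (Int.cast : ℤ → ℝ),
    Int.cast_one, Int.cast_zero]

lemma eps7_eq_cast (a b c d e f g : Fin 7) :
    eps7 a b c d e f g = leviCivita ![a, b, c, d, e, f, g] := by
  unfold eps7 leviCivita; split_ifs <;> simp

lemma leviCivita_comp_swap {n : ℕ} (v : Fin n → Fin n) {i j : Fin n} (hij : i ≠ j) :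
    leviCivita (v ∘ Equiv.swap i j) = -leviCivita v := by
  unfold leviCivita
  by_cases hv : Function.Bijective v
  · have hvs : Function.Bijective (v ∘ Equiv.swap i j) := (Equiv.bijective_comp _ v).2 hv
    have : Equiv.ofBijective _ hvs = Equiv.ofBijective v hv * Equiv.swap i j :=
      Equiv.ext fun _ => rfl
    rw [dif_pos hv, dif_pos hvs, this, Equiv.Perm.sign_mul, Equiv.Perm.sign_swap hij]
    simp
  · rw [dif_neg hv, dif_neg (mt (Equiv.bijective_comp _ v).1 hv), neg_zero]

lemma eps7_eq_neg_of_comp_swap {a b c d e f g a' b' c' d' e' f' g' i j : Fin 7} (hij : i ≠ j)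
    (h : ![a', b', c', d', e', f', g'] = ![a, b, c, d, e, f, g] ∘ Equiv.swap i j) :
    eps7 a' b' c' d' e' f' g' = -eps7 a b c d e f g := by
  rw [eps7_eq_cast, eps7_eq_cast, h, leviCivita_comp_swap _ hij, Int.cast_neg]

lemma eps7_swap₀₁ (a b c d e f g : Fin 7) : eps7 b a c d e f g = -eps7 a b c d e f g :=
  eps7_eq_neg_of_comp_swap (i := 0) (j := 1) (by decide) (by ext x; fin_cases x <;> rfl)

lemma eps7_swap₁₂ (a b c d e f g : Fin 7) : eps7 a c b d e f g = -eps7 a b c d e f g :=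
  eps7_eq_neg_of_comp_swap (i := 1) (j := 2) (by decide) (by ext x; fin_cases x <;> rfl)

lemma eps7_swap₂₃ (a b c d e f g : Fin 7) : eps7 a b d c e f g = -eps7 a b c d e f g :=
  eps7_eq_neg_of_comp_swap (i := 2) (j := 3) (by decide) (by ext x; fin_cases x <;> rfl)

lemma eps7_swap₄₅ (a b c d e f g : Fin 7) : eps7 a b c d f e g = -eps7 a b c d e f g :=
  eps7_eq_neg_of_comp_swap (i := 4) (j := 5) (by decide) (by ext x; fin_cases x <;> rfl)

lemma eps7_swap₅₆ (a b c d e f g : Fin 7) : eps7 a b c d e g f = -eps7 a b c d e f g :=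
  eps7_eq_neg_of_comp_swap (i := 5) (j := 6) (by decide) (by ext x; fin_cases x <;> rfl)

lemma phiZ_antisymm : ∀ a b c, phiZ a b c = -phiZ b a c ∧ phiZ a b c = -phiZ a c b := by
  decide +kernel

lemma isAlternating3_phi0 : IsAlternating3 phi0 :=
  ⟨fun a b c => by simp only [phi0_eq_cast, (phiZ_antisymm a b c).1, Int.cast_neg],
    fun a b c => by simp only [phi0_eq_cast, (phiZ_antisymm a b c).2, Int.cast_neg]⟩

lemma sum_mul_trip (G : Fin 7 → Fin 7 → Fin 7 → ℝ) (i j k : Fin 7) :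
    ∑ a, ∑ b, ∑ c, G a b c * trip i j k a b c = alt3 G i j k := by
  simp only [trip, ite_and, mul_sub, mul_add, mul_ite, mul_one, mul_zero, sum_sub_distrib,
    sum_add_distrib, sum_ite_irrel, sum_ite_eq', mem_univ, if_true, sum_const_zero, alt3]
  ring

lemma sum_phi0_mul_phi0 (d a : Fin 7) : ∑ b, ∑ c, phi0 d b c * phi0 a b c = 6 * kd d a := by
  have key : ∀ d a, ∑ b, ∑ c, phiZ d b c * phiZ a b c = 6 * kdZ d a := by decide +kernel
  simp only [phi0_eq_cast, kd_eq_cast]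
  exact_mod_cast key d a

lemma psi0_eq_sum_eps7 (m n p q : Fin 7) : psi0 m n p q =
    eps7 m n p q 0 1 2 + eps7 m n p q 0 3 4 + eps7 m n p q 0 5 6 + eps7 m n p q 1 3 5
      - eps7 m n p q 1 4 6 - eps7 m n p q 2 3 6 - eps7 m n p q 2 4 5 := by
  have hε : IsAlternating3 (eps7 m n p q) :=
    ⟨fun a b c => eps7_swap₄₅ m n p q b a c, fun a b c => eps7_swap₅₆ m n p q a c b⟩
  simp only [psi0, phi0, mul_add, mul_sub, sum_add_distrib, sum_sub_distrib, sum_mul_trip,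
    hε.alt3_eq]
  ring

lemma psi0_swap₀₁ (m n p q : Fin 7) : psi0 m n p q = -psi0 n m p q := by
  simp only [psi0, eps7_swap₀₁ n m, neg_mul, sum_neg_distrib, mul_neg]

lemma psi0_swap₁₂ (m n p q : Fin 7) : psi0 m n p q = -psi0 m p n q := by
  simp only [psi0, eps7_swap₁₂ m p n, neg_mul, sum_neg_distrib, mul_neg]

lemma psi0_swap₂₃ (m n p q : Fin 7) : psi0 m n p q = -psi0 m n q p := by
  simp only [psi0, eps7_swap₂₃ m n q p, neg_mul, sum_neg_distrib, mul_neg]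

lemma psiZ_swap₀₁ (m n p q : Fin 7) : psiZ m n p q = -psiZ n m p q := by
  simp only [psiZ, (phiZ_antisymm n m _).1, neg_mul, sum_neg_distrib]
  ring

lemma psiZ_swap₁₂ : ∀ m n p q : Fin 7, psiZ m n p q = -psiZ m p n q := by
  decide +kernel

lemma psiZ_swap₂₃ (m n p q : Fin 7) : psiZ m n p q = -psiZ m n q p := by
  simp only [psiZ, (phiZ_antisymm q p _).1, mul_neg, sum_neg_distrib]
  ring

lemma psi0_eq_cast (m n p q : Fin 7) : psi0 m n p q = psiZ m n p q := by
  have increasing : ∀ m n : Fin 7, m < n → ∀ p, n < p → ∀ q, p < q →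
      leviCivita ![m, n, p, q, 0, 1, 2] + leviCivita ![m, n, p, q, 0, 3, 4]
        + leviCivita ![m, n, p, q, 0, 5, 6] + leviCivita ![m, n, p, q, 1, 3, 5]
        - leviCivita ![m, n, p, q, 1, 4, 6] - leviCivita ![m, n, p, q, 2, 3, 6]
        - leviCivita ![m, n, p, q, 2, 4, 5] = psiZ m n p q := by
    decide +kernel
  refine sub_eq_zero.1 (eq_zero_of_lt_of_isAlternating3
    (G := fun m n p q => psi0 m n p q - psiZ m n p q)
    (fun q => ⟨fun m n p => ?_, fun m n p => ?_⟩) (fun m => ⟨fun n p q => ?_, fun n p q => ?_⟩)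
    (fun m n p q hmn hnp hpq => ?_) m n p q)
  · simp only [psi0_swap₀₁ m n, psiZ_swap₀₁ m n]; push_cast; ring
  · simp only [psi0_swap₁₂ m n, psiZ_swap₁₂ m n]; push_cast; ring
  · simp only [psi0_swap₁₂ m n, psiZ_swap₁₂ m n]; push_cast; ring
  · dsimp only; rw [psi0_swap₂₃ m n p q, psiZ_swap₂₃ m n p q]; push_cast; ring
  · rw [psi0_eq_sum_eps7, ← increasing m n hmn p hnp q hpq]
    simp only [eps7_eq_cast]; push_cast; ring

lemma isAlternating3_psi0_left (q : Fin 7) : IsAlternating3 fun m n p => psi0 m n p q :=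
  ⟨fun m n p => psi0_swap₀₁ m n p q, fun m n p => psi0_swap₁₂ m n p q⟩

lemma isAlternating3_psi0_right (m : Fin 7) : IsAlternating3 (psi0 m) :=
  ⟨fun n p q => psi0_swap₁₂ m n p q, fun n p q => psi0_swap₂₃ m n p q⟩

lemma sum_phi0_mul_psi0 (d a e : Fin 7) :
    ∑ b, ∑ c, phi0 d b c * psi0 a b c e = 4 * phi0 d a e := by
  have key : ∀ d a e, ∑ b, ∑ c, phiZ d b c * psiZ a b c e = 4 * phiZ d a e := by decide +kernel
  simp only [phi0_eq_cast, psi0_eq_cast]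
  exact_mod_cast key d a e

lemma iphi_eq_alt3 (h : Matrix (Fin 7) (Fin 7) ℝ) (a b c : Fin 7) :
    iphi h a b c = alt3 (fun x y z => ∑ d, h x d * phi0 d y z) a b c / 6 := by
  have hφ := isAlternating3_phi0
  simp only [iphi, alt3, ← sum_add_distrib, ← sum_sub_distrib, mul_sum, sum_div]
  refine sum_congr rfl fun d _ => ?_
  rw [← hφ.cyclic a d c, hφ.cyclic d a b, hφ.2 d a c, hφ.2 d c b, hφ.2 d b a]
  ring

lemma isAlternating3_iphi (h : Matrix (Fin 7) (Fin 7) ℝ) : IsAlternating3 (iphi h) :=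
  ⟨fun a b c => by simp only [iphi_eq_alt3, (isAlternating3_alt3 _).1 a b c, neg_div],
    fun a b c => by simp only [iphi_eq_alt3, (isAlternating3_alt3 _).2 a b c, neg_div]⟩

lemma iphi_smul (r : ℝ) (h : Matrix (Fin 7) (Fin 7) ℝ) (a b c : Fin 7) :
    iphi (r • h) a b c = r * iphi h a b c := by
  simp only [iphi, Matrix.smul_apply, smul_eq_mul, mul_sum]
  exact sum_congr rfl fun _ _ => by ring

lemma sum_iphi_mul {K : Fin 7 → Fin 7 → Fin 7 → ℝ} (hK : IsAlternating3 K)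
    (h : Matrix (Fin 7) (Fin 7) ℝ) :
    ∑ a, ∑ b, ∑ c, iphi h a b c * K a b c =
      ∑ a, ∑ d, h a d * ∑ b, ∑ c, phi0 d b c * K a b c := by
  have := hK.sum_mul_alt3 fun x y z => ∑ d, h x d * phi0 d y z
  simp only [iphi_eq_alt3, div_mul_eq_mul_div, ← sum_div, mul_comm (alt3 _ _ _ _), this]
  rw [mul_div_cancel_left₀ _ (by norm_num : (6 : ℝ) ≠ 0)]
  refine sum_congr rfl fun a _ => ?_
  simp only [mul_sum]
  rw [sum_congr rfl fun b _ => sum_comm, sum_comm]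
  exact sum_congr rfl fun d _ => sum_congr rfl fun b _ => sum_congr rfl fun c _ => by ring

lemma sum_iphi_mul_phi0 (h : Matrix (Fin 7) (Fin 7) ℝ) :
    ∑ a, ∑ b, ∑ c, iphi h a b c * phi0 a b c = 6 * h.trace := by
  simp only [sum_iphi_mul isAlternating3_phi0, sum_phi0_mul_phi0, kd, mul_ite, mul_one, mul_zero,
    sum_ite_eq', mem_univ, if_true, Matrix.trace, Matrix.diag, mul_sum]
  exact sum_congr rfl fun _ _ => mul_comm _ _

lemma sum_iphi_mul_psi0 {h : Matrix (Fin 7) (Fin 7) ℝ} (hh : h.transpose = h) (e : Fin 7) :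
    ∑ a, ∑ b, ∑ c, iphi h a b c * psi0 a b c e = 0 := by
  simp only [sum_iphi_mul (isAlternating3_psi0_left e), sum_phi0_mul_psi0]
  have : ∑ a, ∑ d, h a d * (4 * phi0 d a e) = -∑ a, ∑ d, h a d * (4 * phi0 d a e) := by
    conv_lhs => rw [sum_comm]
    simp only [← sum_neg_distrib]
    refine sum_congr rfl fun a _ => sum_congr rfl fun d _ => ?_
    rw [← Matrix.transpose_apply h a d, hh, isAlternating3_phi0.1 a d e]
    ring
  linarith

def contractPhi0 (χ : Fin 7 → Fin 7 → Fin 7 → ℝ) : Matrix (Fin 7) (Fin 7) ℝ :=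
  Matrix.of fun x d => ∑ m, ∑ n, χ x m n * phi0 d m n

lemma trace_contractPhi0 (χ : Fin 7 → Fin 7 → Fin 7 → ℝ) :
    (contractPhi0 χ).trace = ∑ a, ∑ b, ∑ c, χ a b c * phi0 a b c :=
  rfl

lemma contractPhi0_sub_contractPhi0 {χ : Fin 7 → Fin 7 → Fin 7 → ℝ} (hχ : IsAlternating3 χ)
    (x y : Fin 7) : 3 * (contractPhi0 χ x y - contractPhi0 χ y x) =
      -∑ e, (∑ m, ∑ n, ∑ p, χ m n p * psi0 m n p e) * phi0 e x y := by
  have certificate : ∀ x y a b : Fin 7, a < b → ∀ c, b < c →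
      alt3 (fun a b c => (if a = x then 3 * phiZ y b c else 0) - if a = y then 3 * phiZ x b c else 0)
        a b c = 6 * -∑ e, psiZ a b c e * phiZ e x y := by
    decide +kernel
  have hL : IsAlternating3 fun a b c => -∑ e, psi0 a b c e * phi0 e x y :=
    (IsAlternating3.sum univ fun e => (isAlternating3_psi0_left e).mul_const _).neg
  have key := hχ.sum_mul_eq_of_alt3 hL (K := fun a b c =>
      (if a = x then 3 * phi0 y b c else 0) - if a = y then 3 * phi0 x b c else 0)
    (fun a b c hab hbc => by
      have := certificate x y a b hab c hbc
      simp only [alt3, phi0_eq_cast, psi0_eq_cast] at this ⊢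
      exact_mod_cast this)
  simp only [mul_sub, sum_sub_distrib, mul_ite, mul_zero, sum_ite_irrel, sum_const_zero,
    sum_ite_eq', mem_univ, if_true, mul_neg, sum_neg_distrib, sum_mul_sum_mul] at key
  rw [← key]
  simp only [contractPhi0, Matrix.of_apply, mul_sub, mul_sum]
  ring_nf

lemma nine_mul_iphi_contractPhi0_of_lt {χ : Fin 7 → Fin 7 → Fin 7 → ℝ} (hχ : IsAlternating3 χ)
    {a b c : Fin 7} (hab : a < b) (hbc : b < c) : 9 * iphi (contractPhi0 χ) a b c =
      12 * χ a b c + (∑ m, ∑ n, ∑ p, χ m n p * phi0 m n p) * phi0 a b c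
        - ∑ e, (∑ m, ∑ n, ∑ p, χ m n p * psi0 m n p e) * psi0 e a b c := by
  have certificate : ∀ a b : Fin 7, a < b → ∀ c, b < c → ∀ x y : Fin 7, x < y → ∀ z, y < z →
      alt3 (fun x y z => (if x = a then ∑ d, phiZ d y z * (3 * phiZ d b c) else 0)
          + (if x = b then ∑ d, phiZ d y z * (3 * phiZ a d c) else 0)
          + (if x = c then ∑ d, phiZ d y z * (3 * phiZ a b d) else 0)) x y z
        = 6 * (alt3 (fun x y z => if x = a ∧ y = b ∧ z = c then 2 else 0) x y z
          + phiZ x y z * phiZ a b c - ∑ e, psiZ x y z e * psiZ e a b c) := by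
    decide +kernel
  have hL : IsAlternating3 fun x y z =>
      alt3 (fun x y z => if x = a ∧ y = b ∧ z = c then 2 else 0) x y z
        + phi0 x y z * phi0 a b c - ∑ e, psi0 x y z e * psi0 e a b c :=
    ((isAlternating3_alt3 _).add (isAlternating3_phi0.mul_const _)).sub
      (IsAlternating3.sum univ fun e => (isAlternating3_psi0_left e).mul_const _)
  -- pairing `χ` with `K` gives `9 i_φ(P(χ))_{abc}`, pairing it with `L` the right-hand side
  have key := hχ.sum_mul_eq_of_alt3 hL (K := fun x y z =>
      (if x = a then ∑ d, phi0 d y z * (3 * phi0 d b c) else 0)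
        + (if x = b then ∑ d, phi0 d y z * (3 * phi0 a d c) else 0)
        + (if x = c then ∑ d, phi0 d y z * (3 * phi0 a b d) else 0))
    (fun x y z hxy hyz => by
      have := certificate a b hab c hbc x y hxy z hyz
      simp only [alt3, phi0_eq_cast, psi0_eq_cast] at this ⊢
      exact_mod_cast this)
  rw [← sub_eq_zero, ← sub_eq_zero.2 key]
  simp only [iphi, mul_add, mul_sub, sum_add_distrib, sum_sub_distrib, sum_mul_sum_mul]
  simp only [sum_sum_mul_sum_mul, hχ.sum_mul_alt3, ← mul_assoc, ← sum_mul, ite_and, mul_ite,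
    mul_zero, sum_ite_irrel, sum_const_zero, sum_ite_eq', mem_univ, if_true, contractPhi0,
    Matrix.of_apply, mul_right_comm _ (3 : ℝ)]
  ring

lemma nine_mul_iphi_contractPhi0 {χ : Fin 7 → Fin 7 → Fin 7 → ℝ} (hχ : IsAlternating3 χ)
    (a b c : Fin 7) : 9 * iphi (contractPhi0 χ) a b c =
      12 * χ a b c + (∑ m, ∑ n, ∑ p, χ m n p * phi0 m n p) * phi0 a b c
        - ∑ e, (∑ m, ∑ n, ∑ p, χ m n p * psi0 m n p e) * psi0 e a b c := by
  have hE : IsAlternating3 fun a b c => 9 * iphi (contractPhi0 χ) a b c -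
      (12 * χ a b c + (∑ m, ∑ n, ∑ p, χ m n p * phi0 m n p) * phi0 a b c
        - ∑ e, (∑ m, ∑ n, ∑ p, χ m n p * psi0 m n p e) * psi0 e a b c) :=
    ((isAlternating3_iphi _).const_mul 9).sub (((hχ.const_mul 12).add
      (isAlternating3_phi0.const_mul _)).sub
        (IsAlternating3.sum univ fun e => (isAlternating3_psi0_right e).const_mul _))
  exact sub_eq_zero.1 (hE.eq_zero_of_lt (fun a b c hab hbc =>
    sub_eq_zero.2 (nine_mul_iphi_contractPhi0_of_lt hχ hab hbc)) a b c)

/-- A totally antisymmetric 3-tensor `χ` on `ℝ⁷` lies in `Λ³₂₇`,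
i.e. `χ = i_φ(h)` for some traceless symmetric `h`, if and only if
`Σ χ_{abc} φ₀^{abc} = 0` and `Σ χ_{mnp} ψ₀^{mnp}{}_a = 0` for every `a`
(the characterization `Λ³₂₇ = {χ : χ ∧ φ₀ = 0 and χ ∧ ψ₀ = 0}`). -/
theorem lambda3_27_characterization (χ : Fin 7 → Fin 7 → Fin 7 → ℝ)
    (hχ₁ : ∀ a b c, χ a b c = -χ b a c) (hχ₂ : ∀ a b c, χ a b c = -χ a c b) :
    (∃ h : Matrix (Fin 7) (Fin 7) ℝ, h.transpose = h ∧ h.trace = 0 ∧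
        ∀ a b c, χ a b c = iphi h a b c) ↔
      ((∑ a, ∑ b, ∑ c, χ a b c * phi0 a b c) = 0 ∧
        ∀ a, (∑ m, ∑ n, ∑ p, χ m n p * psi0 m n p a) = 0) := by
  constructor
  · rintro ⟨h, hsymm, htrace, hχh⟩
    obtain rfl : χ = iphi h := funext₃ hχh
    exact ⟨by rw [sum_iphi_mul_phi0, htrace, mul_zero], sum_iphi_mul_psi0 hsymm⟩
  · rintro ⟨hφ, hψ⟩
    have hχ : IsAlternating3 χ := ⟨hχ₁, hχ₂⟩
    refine ⟨(3 / 4 : ℝ) • contractPhi0 χ, ?_, ?_, fun a b c => ?_⟩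
    · ext x y
      have := contractPhi0_sub_contractPhi0 hχ y x
      simp only [hψ, zero_mul, sum_const_zero, neg_zero] at this
      simp only [Matrix.transpose_apply, Matrix.smul_apply, smul_eq_mul]
      linarith
    · rw [Matrix.trace_smul, trace_contractPhi0, hφ, smul_zero]
    · have := nine_mul_iphi_contractPhi0 hχ a b c
      simp only [hφ, hψ, zero_mul, sum_const_zero, sub_zero, add_zero] at this
      rw [iphi_smul]
      linarith
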